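/- arXiv:math/0310389 — 5 statements merged into one kernel-verified Lean document; each statement's English description precedes it below -/
import Mathlib

section
/- Let R = (R_1, …, R_n) be a tuple of bounded operators on a complex Hilbert space M and let q_{ij} (1 ≤ i < j ≤ n) be arbitrary complex numbers. Let N = { h ∈ M : (conj(q_{ij}) R_j^* R_i^* − R_i^* R_j^*) (R^α)^* h = 0 for all 1 ≤ i < j ≤ n and all α ∈ Λ̃ }. Then: (i) N is a closed subspace invariant under every R_i^*; (ii) for every h ∈ N and all 1 ≤ i < j ≤ n, R_i^* R_j^* h = conj(q_{ij}) R_j^* R_i^* h; and (iii) every closed subspace N' of M satisfying (i) and (ii) is contained in N. In other words, N is the maximal q-commuting piece M^q(R). -/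
/-- The set `N = { h : (conj(q_{ij}) R_j^* R_i^* − R_i^* R_j^*)(R^α)^* h = 0, ∀ i < j, α ∈ Λ̃ }`
is a closed subspace invariant under every `R_i^*`, on which the adjoints satisfy the
`q`-commutation relation, and it contains every closed subspace with these two properties:
it is the maximal `q`-commuting piece `M^q(R)`. -/
theorem stmt1 {M : Type*} [NormedAddCommGroup M] [InnerProductSpace ℂ M] [CompleteSpace M]
    {n : ℕ} (R : Fin n → M →L[ℂ] M) (q : Fin n → Fin n → ℂ) :
    letI N : Set M := {h : M | ∀ i j : Fin n, i < j → ∀ α : List (Fin n),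
      (starRingEnd ℂ (q i j)) • ContinuousLinearMap.adjoint (R j)
          (ContinuousLinearMap.adjoint (R i) (ContinuousLinearMap.adjoint ((α.map R).prod) h))
        - ContinuousLinearMap.adjoint (R i)
          (ContinuousLinearMap.adjoint (R j) (ContinuousLinearMap.adjoint ((α.map R).prod) h))
        = 0}
    -- (i) `N` is a closed subspace, invariant under every `R_i^*`
    (∃ Nsub : Submodule ℂ M, (Nsub : Set M) = N ∧ IsClosed N) ∧
    (∀ i : Fin n, ∀ h ∈ N, ContinuousLinearMap.adjoint (R i) h ∈ N) ∧
    -- (ii) the `q`-commutation relation for the adjoints holds on `N`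
    (∀ h ∈ N, ∀ i j : Fin n, i < j →
      ContinuousLinearMap.adjoint (R i) (ContinuousLinearMap.adjoint (R j) h)
        = (starRingEnd ℂ (q i j)) •
            ContinuousLinearMap.adjoint (R j) (ContinuousLinearMap.adjoint (R i) h)) ∧
    -- (iii) maximality: every closed subspace satisfying (i) and (ii) is contained in `N`
    (∀ N' : Submodule ℂ M, IsClosed (N' : Set M) →
      (∀ i : Fin n, ∀ h ∈ N', ContinuousLinearMap.adjoint (R i) h ∈ N') →
      (∀ h ∈ N', ∀ i j : Fin n, i < j →
        ContinuousLinearMap.adjoint (R i) (ContinuousLinearMap.adjoint (R j) h)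
          = (starRingEnd ℂ (q i j)) •
              ContinuousLinearMap.adjoint (R j) (ContinuousLinearMap.adjoint (R i) h)) →
      (N' : Set M) ⊆ N) := by
  set N : Set M := {h : M | ∀ i j : Fin n, i < j → ∀ α : List (Fin n),
      (starRingEnd ℂ (q i j)) • ContinuousLinearMap.adjoint (R j)
          (ContinuousLinearMap.adjoint (R i) (ContinuousLinearMap.adjoint ((α.map R).prod) h))
        - ContinuousLinearMap.adjoint (R i)
          (ContinuousLinearMap.adjoint (R j) (ContinuousLinearMap.adjoint ((α.map R).prod) h))
        = 0} with hNdef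
  have hadj_mul : ∀ A B : M →L[ℂ] M, ContinuousLinearMap.adjoint (A * B)
      = ContinuousLinearMap.adjoint B * ContinuousLinearMap.adjoint A := by
    intro A B
    rw [ContinuousLinearMap.mul_def, ContinuousLinearMap.adjoint_comp]
    rfl
  have hadj_one : ContinuousLinearMap.adjoint (1 : M →L[ℂ] M) = 1 := by
    ext x
    apply ext_inner_right (𝕜 := ℂ)
    intro y
    simp [ContinuousLinearMap.adjoint_inner_left]
  refine ⟨?_, ?_, ?_, ?_⟩
  · -- (i): submodule and closed
    refine ⟨{ carrier := N
              add_mem' := ?_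
              zero_mem' := ?_
              smul_mem' := ?_ }, rfl, ?_⟩
    · intro a b ha hb
      simp only [hNdef, Set.mem_setOf_eq] at ha hb ⊢
      intro i j hij α
      have h1 := ha i j hij α
      have h2 := hb i j hij α
      simp only [map_add, smul_add]
      rw [← sub_add_sub_comm, h1, h2, add_zero]
    · simp only [hNdef, Set.mem_setOf_eq]; intro i j hij α; simp
    · intro c x hx
      simp only [hNdef, Set.mem_setOf_eq] at hx ⊢
      intro i j hij α
      have h1 := hx i j hij α
      simp only [map_smul]
      rw [smul_comm, ← smul_sub, h1, smul_zero]
    · -- closedness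
      have heq : N = ⋂ (i : Fin n) (j : Fin n) (_ : i < j) (α : List (Fin n)),
          {h : M | (starRingEnd ℂ (q i j)) • ContinuousLinearMap.adjoint (R j)
            (ContinuousLinearMap.adjoint (R i) (ContinuousLinearMap.adjoint ((α.map R).prod) h))
            - ContinuousLinearMap.adjoint (R i)
            (ContinuousLinearMap.adjoint (R j) (ContinuousLinearMap.adjoint ((α.map R).prod) h))
            = 0} := by
        rw [hNdef]
        ext h
        simp only [Set.mem_iInter, Set.mem_setOf_eq]
      rw [heq]
      refine isClosed_iInter fun i => isClosed_iInter fun j => isClosed_iInter fun _ =>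
        isClosed_iInter fun α => ?_
      have hc : Continuous fun h : M =>
          (starRingEnd ℂ (q i j)) • ContinuousLinearMap.adjoint (R j)
            (ContinuousLinearMap.adjoint (R i) (ContinuousLinearMap.adjoint ((α.map R).prod) h))
          - ContinuousLinearMap.adjoint (R i)
            (ContinuousLinearMap.adjoint (R j) (ContinuousLinearMap.adjoint ((α.map R).prod) h)) := by
        fun_prop
      exact isClosed_eq hc continuous_const
  · -- invariance under R_k^*
    intro k h hh
    simp only [hNdef, Set.mem_setOf_eq] at hh ⊢
    intro i j hij α
    have := hh i j hij (k :: α)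
    simp only [List.map_cons, List.prod_cons, hadj_mul, ContinuousLinearMap.mul_apply] at this
    exact this
  · -- (ii)
    intro h hh i j hij
    simp only [hNdef, Set.mem_setOf_eq] at hh
    have := hh i j hij []
    simp only [List.map_nil, List.prod_nil, hadj_one, ContinuousLinearMap.one_apply] at this
    rw [sub_eq_zero] at this
    exact this.symm
  · -- (iii)
    intro N' _ hinv hcomm h hN'
    have key : ∀ (α : List (Fin n)) (x : M), x ∈ N' →
        ContinuousLinearMap.adjoint ((α.map R).prod) x ∈ N' := by
      intro α
      induction α with
      | nil =>
        intro x hx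
        simpa [hadj_one] using hx
      | cons a t ih =>
        intro x hx
        simp only [List.map_cons, List.prod_cons, hadj_mul, ContinuousLinearMap.mul_apply]
        exact ih _ (hinv a x hx)
    simp only [hNdef, Set.mem_setOf_eq]
    intro i j hij α
    have hx := key α h hN'
    have := hcomm _ hx i j hij
    rw [this, sub_self]
end

section
/- Let R = (R_1, …, R_n) and T = (T_1, …, T_n) be tuples of bounded operators on complex Hilbert spaces L and M respectively, and let q_{ij} (1 ≤ i < j ≤ n) be complex numbers. Then the maximal q-commuting piece of the direct-sum tuple (R_1 ⊕ T_1, …, R_n ⊕ T_n) acting on the Hilbert space direct sum L ⊕ M equals L^q(R) ⊕ M^q(T), the direct sum of the maximal q-commuting pieces of R and of T. -/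
/-!
The defining condition of the maximal `q`-commuting piece is the vanishing of the operators
`(conj q_{ij} R_j^* R_i^* - R_i^* R_j^*) (R^α)^*`. Adjoints, products, scalar multiples and
differences of direct sums are computed componentwise, so for `R ⊕ T` each such operator is
the direct sum of the corresponding operators for `R` and for `T`, and a direct sum of
operators kills `(x, y)` exactly when each summand kills its component.
-/

def qPiece {M : Type*} [NormedAddCommGroup M] [InnerProductSpace ℂ M] [CompleteSpace M]
    {n : ℕ} (R : Fin n → M →L[ℂ] M) (q : Fin n → Fin n → ℂ) : Set M :=
  {h : M | ∀ i j : Fin n, i < j → ∀ α : List (Fin n),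
    (starRingEnd ℂ (q i j)) • ContinuousLinearMap.adjoint (R j)
        (ContinuousLinearMap.adjoint (R i) (ContinuousLinearMap.adjoint ((α.map R).prod) h))
      - ContinuousLinearMap.adjoint (R i)
        (ContinuousLinearMap.adjoint (R j) (ContinuousLinearMap.adjoint ((α.map R).prod) h))
      = 0}

noncomputable def dirSum {L M : Type*}
    [NormedAddCommGroup L] [InnerProductSpace ℂ L] [CompleteSpace L]
    [NormedAddCommGroup M] [InnerProductSpace ℂ M] [CompleteSpace M]
    (A : L →L[ℂ] L) (B : M →L[ℂ] M) : WithLp 2 (L × M) →L[ℂ] WithLp 2 (L × M) :=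
  ((WithLp.prodContinuousLinearEquiv 2 ℂ L M).symm : L × M →L[ℂ] WithLp 2 (L × M)).comp
    ((A.prodMap B).comp
      ((WithLp.prodContinuousLinearEquiv 2 ℂ L M) : WithLp 2 (L × M) →L[ℂ] L × M))

open ContinuousLinearMap

section DirSum

variable {L M : Type*}
  [NormedAddCommGroup L] [InnerProductSpace ℂ L] [CompleteSpace L]
  [NormedAddCommGroup M] [InnerProductSpace ℂ M] [CompleteSpace M]

lemma dirSum_mul (A C : L →L[ℂ] L) (B D : M →L[ℂ] M) :
    dirSum A B * dirSum C D = dirSum (A * C) (B * D) := rfl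

lemma dirSum_one : dirSum (1 : L →L[ℂ] L) (1 : M →L[ℂ] M) = 1 := rfl

lemma dirSum_sub (A C : L →L[ℂ] L) (B D : M →L[ℂ] M) :
    dirSum A B - dirSum C D = dirSum (A - C) (B - D) := rfl

lemma smul_dirSum (c : ℂ) (A : L →L[ℂ] L) (B : M →L[ℂ] M) :
    c • dirSum A B = dirSum (c • A) (c • B) := rfl

lemma adjoint_dirSum (A : L →L[ℂ] L) (B : M →L[ℂ] M) :
    adjoint (dirSum A B) = dirSum (adjoint A) (adjoint B) := by
  symm
  rw [eq_adjoint_iff]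
  intro x y
  simp only [WithLp.prod_inner_apply]
  exact congrArg₂ (· + ·) (adjoint_inner_left A _ _) (adjoint_inner_left B _ _)

lemma list_prod_map_dirSum {ι : Type*} (R : ι → L →L[ℂ] L) (T : ι → M →L[ℂ] M)
    (α : List ι) :
    (α.map fun i => dirSum (R i) (T i)).prod = dirSum (α.map R).prod (α.map T).prod := by
  induction α with
  | nil => exact dirSum_one.symm
  | cons a l ih => simp only [List.map_cons, List.prod_cons, ih, dirSum_mul]

lemma dirSum_apply_eq_zero_iff (A : L →L[ℂ] L) (B : M →L[ℂ] M) (x : WithLp 2 (L × M)) :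
    dirSum A B x = 0 ↔ A x.fst = 0 ∧ B x.snd = 0 := by
  rw [WithLp.ext_iff, Prod.ext_iff]
  rfl

end DirSum

section QPiece

variable {M : Type*} [NormedAddCommGroup M] [InnerProductSpace ℂ M] [CompleteSpace M] {n : ℕ}

noncomputable def qCommDefect (R : Fin n → M →L[ℂ] M) (q : Fin n → Fin n → ℂ) (i j : Fin n)
    (α : List (Fin n)) : M →L[ℂ] M :=
  (starRingEnd ℂ (q i j) • (adjoint (R j) * adjoint (R i)) - adjoint (R i) * adjoint (R j))
    * adjoint (α.map R).prod

lemma mem_qPiece_iff (R : Fin n → M →L[ℂ] M) (q : Fin n → Fin n → ℂ) (h : M) :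
    h ∈ qPiece R q ↔ ∀ i j, i < j → ∀ α, qCommDefect R q i j α h = 0 := Iff.rfl

lemma qCommDefect_dirSum {L : Type*} [NormedAddCommGroup L] [InnerProductSpace ℂ L]
    [CompleteSpace L] (R : Fin n → L →L[ℂ] L) (T : Fin n → M →L[ℂ] M)
    (q : Fin n → Fin n → ℂ) (i j : Fin n) (α : List (Fin n)) :
    qCommDefect (fun i => dirSum (R i) (T i)) q i j α
      = dirSum (qCommDefect R q i j α) (qCommDefect T q i j α) := by
  simp only [qCommDefect, list_prod_map_dirSum, adjoint_dirSum, dirSum_mul, smul_dirSum,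
    dirSum_sub]

end QPiece

/-- The maximal `q`-commuting piece of a direct sum of two tuples is the direct sum of the
maximal `q`-commuting pieces. -/
theorem stmt2 {L M : Type*}
    [NormedAddCommGroup L] [InnerProductSpace ℂ L] [CompleteSpace L]
    [NormedAddCommGroup M] [InnerProductSpace ℂ M] [CompleteSpace M]
    {n : ℕ} (R : Fin n → L →L[ℂ] L) (T : Fin n → M →L[ℂ] M) (q : Fin n → Fin n → ℂ) :
    qPiece (fun i => dirSum (R i) (T i)) q
      = {x : WithLp 2 (L × M) |
          ((WithLp.prodContinuousLinearEquiv 2 ℂ L M) x).1 ∈ qPiece R q ∧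
          ((WithLp.prodContinuousLinearEquiv 2 ℂ L M) x).2 ∈ qPiece T q} := by
  ext x
  simp only [Set.mem_ofPred_eq, mem_qPiece_iff, qCommDefect_dirSum, dirSum_apply_eq_zero_iff,
    forall_and]
  rfl
end

section
/- Let q_{ij} (1 ≤ i, j ≤ n) be nonzero complex numbers with q_{ii} = 1 and q_{ji} = q_{ij}^{-1}. Let x = (x_1, …, x_m) ∈ {1, …, n}^m and let σ be a permutation of {1, …, m} such that x_{σ^{-1}(i)} = x_i for every i (σ stabilizes the word x). Then q^σ(x) = 1, where q^σ(x) = ∏ q_{x_{σ^{-1}(k)} x_{σ^{-1}(i)}}, the product being over all pairs 1 ≤ i < k ≤ m with σ^{-1}(i) > σ^{-1}(k). -/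
/-!
Write `τ = σ⁻¹`; since `x ∘ τ = x`, the factor of an inversion `(i, k)` of `τ` is
`q (x k) (x i)`, so `q^σ(x) = ∏_{(a,b)} q_{ba}^{N(a,b)}`, where `N(a,b)` counts the inversions
whose letters are `(x i, x k) = (a, b)`. The heart of the matter is `N(a,b) = N(b,a)`: for
`a ≠ b`, the pairs of positions carrying the letters `(a, b)` are equally often increasing
for the order of positions as for the order of their `τ`-images (`τ` permutes them), and
discarding the pairs increasing for both leaves the inversions of pattern `(a, b)` on one side
and the swapped inversions of pattern `(b, a)` on the other. The factors then cancel in pairs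
since `q_{ab} q_{ba} = 1`, and diagonal ones are `q_{aa} = 1`.
-/

/-- `q^σ(x) = ∏ q_{x_{σ⁻¹(k)} x_{σ⁻¹(i)}}`, the product over all pairs `i < k`
with `σ⁻¹(i) > σ⁻¹(k)`. -/
noncomputable def qSigma {n : ℕ} (q : Fin n → Fin n → ℂ) {m : ℕ} (x : Fin m → Fin n)
    (σ : Equiv.Perm (Fin m)) : ℂ :=
  ∏ p ∈ Finset.univ.filter (fun p : Fin m × Fin m => p.1 < p.2 ∧ σ⁻¹ p.2 < σ⁻¹ p.1),
    q (x (σ⁻¹ p.2)) (x (σ⁻¹ p.1))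

open Finset

namespace Equiv.Perm

variable {α : Type*} [LinearOrder α] {τ : Perm α}

lemma card_filter_lt_eq_card_filter_apply_lt {A : Finset (α × α)}
    (hA : ∀ p, Prod.map τ τ p ∈ A ↔ p ∈ A) :
    #{p ∈ A | p.1 < p.2} = #{p ∈ A | τ p.1 < τ p.2} :=
  (card_equiv (τ.prodCongr τ) fun p => by simp [hA]).symm

variable [Fintype α]

def inversions (τ : Perm α) : Finset (α × α) := {p | p.1 < p.2 ∧ τ p.2 < τ p.1}

variable {β : Type*} [DecidableEq β] {x : α → β}

lemma card_filter_inversions_comm (hx : ∀ i, x (τ i) = x i) (a b : β) :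
    #{p ∈ τ.inversions | x p.1 = a ∧ x p.2 = b} =
      #{p ∈ τ.inversions | x p.1 = b ∧ x p.2 = a} := by
  obtain rfl | hab := eq_or_ne a b
  · rfl
  set A : Finset (α × α) := {p | x p.1 = a ∧ x p.2 = b}
  have hleft : #{p ∈ τ.inversions | x p.1 = a ∧ x p.2 = b} =
      #{p ∈ {p ∈ A | p.1 < p.2} | ¬ τ p.1 < τ p.2} := by
    congr 1; ext p
    simp only [inversions, A, mem_filter, mem_univ, true_and, not_lt]
    grind [τ.injective.ne]
  have hright : #{p ∈ τ.inversions | x p.1 = b ∧ x p.2 = a} =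
      #{p ∈ {p ∈ A | τ p.1 < τ p.2} | ¬ p.1 < p.2} := by
    refine card_equiv (Equiv.prodComm α α) fun p => ?_
    simp only [inversions, A, mem_filter, mem_univ, true_and, not_lt, Equiv.prodComm_apply,
      Prod.fst_swap, Prod.snd_swap]
    grind
  have hlt : #{p ∈ A | p.1 < p.2} = #{p ∈ A | τ p.1 < τ p.2} :=
    card_filter_lt_eq_card_filter_apply_lt fun p => by simp [A, hx]
  have hsplit₁ :=
    card_filter_add_card_filter_not (s := {p ∈ A | p.1 < p.2}) fun p => τ p.1 < τ p.2
  have hsplit₂ :=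
    card_filter_add_card_filter_not (s := {p ∈ A | τ p.1 < τ p.2}) fun p => p.1 < p.2
  rw [filter_comm] at hsplit₂
  omega

lemma prod_inversions_eq_one {M : Type*} [CommMonoid M] {g : β → β → M}
    (hg_diag : ∀ a, g a a = 1) (hg_swap : ∀ a b, g a b * g b a = 1)
    (hx : ∀ i, x (τ i) = x i) :
    ∏ p ∈ τ.inversions, g (x p.1) (x p.2) = 1 := by
  set S := univ.image x
  refine (prod_fiberwise_of_maps_to' (t := S ×ˢ S) (g := fun p : α × α => (x p.1, x p.2))
    (by simp [S]) fun ab => g ab.1 ab.2).symm.trans ?_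
  simp only [prod_const]
  refine prod_involution (fun ab _ => ab.swap) (fun ab _ => ?_) (fun ab _ => ?_)
    (fun ab hab => by simpa [and_comm] using hab) (fun ab _ => ab.swap_swap)
  · obtain ⟨a, b⟩ := ab
    simp only [Prod.swap_prod_mk, Prod.mk.injEq]
    rw [← card_filter_inversions_comm hx, ← mul_pow, hg_swap, one_pow]
  · obtain ⟨a, b⟩ := ab
    rintro hne hswap
    obtain rfl : b = a := congrArg Prod.fst hswap
    simp [hg_diag] at hne

end Equiv.Perm

/-- If `σ` stabilizes the word `x` (i.e. `x ∘ σ⁻¹ = x`), then `q^σ(x) = 1`. -/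
theorem stmt5 {n : ℕ} (q : Fin n → Fin n → ℂ)
    (hq0 : ∀ i j, q i j ≠ 0) (hq1 : ∀ i, q i i = 1) (hq2 : ∀ i j, q j i = (q i j)⁻¹)
    (m : ℕ) (x : Fin m → Fin n) (σ : Equiv.Perm (Fin m))
    (hstab : ∀ i, x (σ⁻¹ i) = x i) :
    qSigma q x σ = 1 := by
  have hrw : qSigma q x σ = ∏ p ∈ σ⁻¹.inversions, q (x p.2) (x p.1) :=
    prod_congr rfl fun p _ => by rw [hstab, hstab]
  rw [hrw]
  exact Equiv.Perm.prod_inversions_eq_one (g := fun a b => q b a) hq1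
    (fun a b => by rw [hq2 a b, inv_mul_cancel₀ (hq0 a b)]) hstab
end

section
/- Let T_i and T_j be bounded normal operators on a complex Hilbert space H and let q be a complex number with |q| = 1 such that T_j T_i = q T_i T_j. Then T_j^* T_i = conj(q) T_i T_j^* and T_j^* T_i^* = q T_i^* T_j^*. -/
/-!
`T_j T_i = q T_i T_j` says that `T_i` intertwines the normal operators `q T_j` and `T_j`, so by
the Fuglede–Putnam–Rosenblum theorem it also intertwines their adjoints, which is the first
identity. The second is the adjoint of the relation itself, rescaled using `q conj(q) = 1`.
-/

theorem star_mul_eq_conj_smul_mul_star_of_mul_eq_smul_mul {A : Type*} [NonUnitalCStarAlgebra A]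
    {a x : A} (ha : IsStarNormal a) (q : ℂ) (h : a * x = q • (x * a)) :
    star a * x = (starRingEnd ℂ q) • (x * star a) := by
  have hsemiconj : SemiconjBy x (q • a) a := by
    rw [SemiconjBy, mul_smul_comm, h]
  have := hsemiconj.star_right inferInstance ha
  rwa [SemiconjBy, star_smul, mul_smul_comm, eq_comm] at this

theorem star_mul_star_eq_smul_mul_of_mul_eq_smul_mul {A : Type*} [Mul A] [StarMul A]
    [MulAction ℂ A] [StarModule ℂ A] {a x : A} {q : ℂ} (hq : ‖q‖ = 1)
    (h : a * x = q • (x * a)) :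
    star a * star x = q • (star x * star a) := by
  have hq' : q * starRingEnd ℂ q = 1 := by
    rw [Complex.mul_conj', hq]
    norm_num
  have h_star : star x * star a = starRingEnd ℂ q • (star a * star x) := by
    rw [← star_mul, h, star_smul, star_mul, starRingEnd_apply]
  rw [h_star, smul_smul, hq', one_smul]

theorem stmt13_general {H : Type*} [NormedAddCommGroup H] [InnerProductSpace ℂ H] [CompleteSpace H]
    (Ti Tj : H →L[ℂ] H) (q : ℂ) (hq : ‖q‖ = 1)
    (hTj : Tj * ContinuousLinearMap.adjoint Tj = ContinuousLinearMap.adjoint Tj * Tj)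
    (hcomm : Tj * Ti = q • (Ti * Tj)) :
    ContinuousLinearMap.adjoint Tj * Ti
        = (starRingEnd ℂ q) • (Ti * ContinuousLinearMap.adjoint Tj)
      ∧ ContinuousLinearMap.adjoint Tj * ContinuousLinearMap.adjoint Ti
        = q • (ContinuousLinearMap.adjoint Ti * ContinuousLinearMap.adjoint Tj) := by
  simp only [← ContinuousLinearMap.star_eq_adjoint] at hTj ⊢
  have hTj_normal : IsStarNormal Tj := ⟨hTj.symm⟩
  exact ⟨star_mul_eq_conj_smul_mul_star_of_mul_eq_smul_mul hTj_normal q hcomm,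
    star_mul_star_eq_smul_mul_of_mul_eq_smul_mul hq hcomm⟩

/-- Fuglede–Putnam type consequence of the `q`-commutation relation for normal operators:
if `T_i, T_j` are bounded normal operators on a complex Hilbert space, `|q| = 1` and
`T_j T_i = q T_i T_j`, then `T_j^* T_i = conj(q) T_i T_j^*` and
`T_j^* T_i^* = q T_i^* T_j^*`. -/
theorem stmt13 {H : Type*} [NormedAddCommGroup H] [InnerProductSpace ℂ H] [CompleteSpace H]
    (Ti Tj : H →L[ℂ] H) (q : ℂ) (hq : ‖q‖ = 1)
    (hTi : Ti * ContinuousLinearMap.adjoint Ti = ContinuousLinearMap.adjoint Ti * Ti)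
    (hTj : Tj * ContinuousLinearMap.adjoint Tj = ContinuousLinearMap.adjoint Tj * Tj)
    (hcomm : Tj * Ti = q • (Ti * Tj)) :
    ContinuousLinearMap.adjoint Tj * Ti
        = (starRingEnd ℂ q) • (Ti * ContinuousLinearMap.adjoint Tj)
      ∧ ContinuousLinearMap.adjoint Tj * ContinuousLinearMap.adjoint Ti
        = q • (ContinuousLinearMap.adjoint Ti * ContinuousLinearMap.adjoint Tj) :=
  stmt13_general Ti Tj q hq hTj hcomm
end

section
/- Fix n ≥ 2 and complex numbers q_{ij} (1 ≤ i, j ≤ n) with q_{ii} = 1, q_{ji} = q_{ij}^{-1} and |q_{ij}| = 1. Let T = (T_1, …, T_n) be a q-spherical unitary on a complex Hilbert space H, and let D be the block operator on H^n with (i,j) entry δ_{ij} I − T_i^* T_j. Then for every (h_1, …, h_n) ∈ H^n: Σ_{i,r=1}^n ‖T_i^* h_r − conj(q_{ir}) T_r^* h_i‖² = 2 ⟨D(h_1, …, h_n), (h_1, …, h_n)⟩. -/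
open scoped BigOperators

noncomputable instance piLpCompleteSpace {n : ℕ} {H : Type*} [NormedAddCommGroup H]
    [CompleteSpace H] : CompleteSpace (PiLp 2 (fun _ : Fin n => H)) :=
  inferInstance

/-!
By the Fuglede–Putnam theorem, `T r * T i = q i r • (T i * T r)` with `T i` normal gives
`T r * (T i)† = conj (q i r) • ((T i)† * T r)`, hence
`⟪(T i)† x, (T r)† y⟫ = q i r * ⟪T r x, T i y⟫`. As `|q i r| = 1`, the `(i, r)` summand is
`‖(T i)† h r‖² + ‖(T r)† h i‖² - 2 Re ⟪T r (h r), T i (h i)⟫`, and summing with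
`∑ i, T i (T i)† = 1` shows that both sides equal `2 (‖h‖² - ‖∑ i, T i (h i)‖²)`.
-/

open ContinuousLinearMap RCLike

lemma IsStarNormal.smul_complex {A : Type*} [NonUnitalCStarAlgebra A] {a : A}
    (ha : IsStarNormal a) (c : ℂ) : IsStarNormal (c • a) :=
  ⟨by rw [star_smul]; exact (ha.star_comm_self.smul_left _).smul_right _⟩

lemma mul_star_eq_of_mul_eq_smul {A : Type*} [NonUnitalCStarAlgebra A] {a x : A}
    (ha : IsStarNormal a) {c : ℂ} (h : x * a = c • (a * x)) :
    x * star a = star c • (star a * x) := by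
  have hsemi : SemiconjBy x a (c • a) := by rwa [SemiconjBy, smul_mul_assoc]
  rw [(hsemi.star_right ha (ha.smul_complex c)).eq, star_smul, smul_mul_assoc]

section Operators

variable {H : Type*} [NormedAddCommGroup H] [InnerProductSpace ℂ H] [CompleteSpace H]

local notation "⟪" x ", " y "⟫" => inner ℂ x y

lemma mul_adjoint_eq_of_mul_eq_smul {S T : H →L[ℂ] H}
    (hS : S * adjoint S = adjoint S * S) {c : ℂ} (h : T * S = c • (S * T)) :
    T * adjoint S = starRingEnd ℂ c • (adjoint S * T) :=
  mul_star_eq_of_mul_eq_smul ⟨hS.symm⟩ h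

lemma inner_adjoint_apply_adjoint_apply {S T : H →L[ℂ] H} {c : ℂ}
    (h : T * adjoint S = starRingEnd ℂ c • (adjoint S * T)) (x y : H) :
    ⟪adjoint S x, adjoint T y⟫ = c * ⟪T x, S y⟫ := by
  rw [adjoint_inner_right, ← mul_apply_eq_comp, h, smul_apply, inner_smul_left,
    Complex.conj_conj, mul_apply_eq_comp, adjoint_inner_left]

lemma norm_adjoint_apply_sub_smul_sq {S T : H →L[ℂ] H} {c : ℂ} (hc : ‖c‖ = 1)
    (h : T * adjoint S = starRingEnd ℂ c • (adjoint S * T)) (x y : H) :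
    ‖adjoint S x - starRingEnd ℂ c • adjoint T y‖ ^ 2
      = ‖adjoint S x‖ ^ 2 + ‖adjoint T y‖ ^ 2 - 2 * re ⟪T x, S y⟫ := by
  have hcc : starRingEnd ℂ c * c = 1 := by
    rw [mul_comm, Complex.mul_conj, Complex.normSq_eq_norm_sq, hc]; norm_num
  rw [norm_sub_sq (𝕜 := ℂ), inner_smul_right, inner_adjoint_apply_adjoint_apply h,
    ← mul_assoc, hcc, one_mul, norm_smul, Complex.norm_conj, hc, one_mul]
  ring

lemma sum_norm_adjoint_apply_sq {ι : Type*} [Fintype ι] {T : ι → H →L[ℂ] H}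
    (hT : ∑ i, T i * adjoint (T i) = 1) (x : H) :
    ∑ i, ‖adjoint (T i) x‖ ^ 2 = ‖x‖ ^ 2 := by
  calc ∑ i, ‖adjoint (T i) x‖ ^ 2 = ∑ i, re ⟪T i (adjoint (T i) x), x⟫ := by
        simp only [← inner_self_eq_norm_sq (𝕜 := ℂ), adjoint_inner_right]
    _ = re ⟪(∑ i, T i * adjoint (T i)) x, x⟫ := by
        simp only [sum_apply, sum_inner, map_sum, mul_apply_eq_comp]
    _ = ‖x‖ ^ 2 := by rw [hT, one_apply_eq_self, inner_self_eq_norm_sq]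

lemma sum_sum_re_inner {𝕜 E ι : Type*} [RCLike 𝕜] [SeminormedAddCommGroup E]
    [InnerProductSpace 𝕜 E] [Fintype ι] (v : ι → E) :
    ∑ i, ∑ r, re (inner 𝕜 (v r) (v i)) = ‖∑ i, v i‖ ^ 2 := by
  rw [← inner_self_eq_norm_sq (𝕜 := 𝕜), sum_inner, map_sum, Finset.sum_comm]
  simp only [inner_sum, map_sum]

lemma sum_sum_norm_adjoint_apply_sub_smul_sq {ι : Type*} [Fintype ι] {q : ι → ι → ℂ}
    (hq : ∀ i r, ‖q i r‖ = 1) {T : ι → H →L[ℂ] H}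
    (hcomm : ∀ i r, T r * adjoint (T i) = starRingEnd ℂ (q i r) • (adjoint (T i) * T r))
    (hT : ∑ i, T i * adjoint (T i) = 1) (h : ι → H) :
    ∑ i, ∑ r, ‖adjoint (T i) (h r) - starRingEnd ℂ (q i r) • adjoint (T r) (h i)‖ ^ 2
      = 2 * (∑ i, ‖h i‖ ^ 2 - ‖∑ i, T i (h i)‖ ^ 2) := by
  simp only [norm_adjoint_apply_sub_smul_sq (hq _ _) (hcomm _ _), Finset.sum_sub_distrib,
    Finset.sum_add_distrib, ← Finset.mul_sum, sum_sum_re_inner (𝕜 := ℂ) (fun i => T i (h i))]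
  rw [Finset.sum_comm]
  simp only [sum_norm_adjoint_apply_sq hT]
  ring

lemma inner_apply_self_eq_of_apply_eq_sub_sum {n : ℕ} (T : Fin n → H →L[ℂ] H)
    (D : PiLp 2 (fun _ : Fin n => H) →L[ℂ] PiLp 2 (fun _ : Fin n => H))
    (hD : ∀ h i, D h i = h i - ∑ j, adjoint (T i) (T j (h j)))
    (h : PiLp 2 (fun _ : Fin n => H)) :
    ⟪D h, h⟫ = ((∑ i, ‖h i‖ ^ 2 - ‖∑ i, T i (h i)‖ ^ 2 : ℝ) : ℂ) := by
  simp only [PiLp.inner_apply, hD, inner_sub_left, sum_inner, adjoint_inner_left,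
    Finset.sum_sub_distrib]
  simp only [← sum_inner, ← inner_sum, inner_self_eq_norm_sq_to_K]
  norm_cast

end Operators

theorem stmt15_general {H : Type*} [NormedAddCommGroup H] [InnerProductSpace ℂ H] [CompleteSpace H]
    {n : ℕ} (q : Fin n → Fin n → ℂ)
    (hq3 : ∀ i j, ‖q i j‖ = 1)
    (T : Fin n → H →L[ℂ] H)
    (hnormal : ∀ i, T i * ContinuousLinearMap.adjoint (T i)
      = ContinuousLinearMap.adjoint (T i) * T i)
    (hqcomm : ∀ i j, T j * T i = q i j • (T i * T j))
    (hsph : ∑ i, T i * ContinuousLinearMap.adjoint (T i) = 1)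
    (D : PiLp 2 (fun _ : Fin n => H) →L[ℂ] PiLp 2 (fun _ : Fin n => H))
    (hD : ∀ (h : PiLp 2 (fun _ : Fin n => H)) (i : Fin n),
      D h i = h i - ∑ j, ContinuousLinearMap.adjoint (T i) (T j (h j))) :
    ∀ h : PiLp 2 (fun _ : Fin n => H),
      ((∑ i, ∑ r, ‖ContinuousLinearMap.adjoint (T i) (h r)
          - (starRingEnd ℂ (q i r)) • ContinuousLinearMap.adjoint (T r) (h i)‖ ^ 2 : ℝ) : ℂ)
        = 2 * (inner ℂ (D h) h : ℂ) := by
  intro h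
  have hcomm i r := mul_adjoint_eq_of_mul_eq_smul (hnormal i) (hqcomm i r)
  rw [sum_sum_norm_adjoint_apply_sub_smul_sq hq3 hcomm hsph,
    inner_apply_self_eq_of_apply_eq_sub_sum T D hD]
  norm_cast

/-- For a `q`-spherical unitary `T` and the block operator `D` on `H^n` with `(i,j)` entry
`δ_{ij} I − T_i^* T_j`, one has
`Σ_{i,r} ‖T_i^* h_r − conj(q_{ir}) T_r^* h_i‖² = 2 ⟨D h, h⟩` for every `h ∈ H^n`. -/
theorem stmt15 {H : Type*} [NormedAddCommGroup H] [InnerProductSpace ℂ H] [CompleteSpace H]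
    {n : ℕ} (hn : 2 ≤ n) (q : Fin n → Fin n → ℂ)
    (hq1 : ∀ i, q i i = 1) (hq2 : ∀ i j, q j i = (q i j)⁻¹) (hq3 : ∀ i j, ‖q i j‖ = 1)
    (T : Fin n → H →L[ℂ] H)
    (hnormal : ∀ i, T i * ContinuousLinearMap.adjoint (T i)
      = ContinuousLinearMap.adjoint (T i) * T i)
    (hqcomm : ∀ i j, T j * T i = q i j • (T i * T j))
    (hsph : ∑ i, T i * ContinuousLinearMap.adjoint (T i) = 1)
    (D : PiLp 2 (fun _ : Fin n => H) →L[ℂ] PiLp 2 (fun _ : Fin n => H))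
    (hD : ∀ (h : PiLp 2 (fun _ : Fin n => H)) (i : Fin n),
      D h i = h i - ∑ j, ContinuousLinearMap.adjoint (T i) (T j (h j))) :
    ∀ h : PiLp 2 (fun _ : Fin n => H),
      ((∑ i, ∑ r, ‖ContinuousLinearMap.adjoint (T i) (h r)
          - (starRingEnd ℂ (q i r)) • ContinuousLinearMap.adjoint (T r) (h i)‖ ^ 2 : ℝ) : ℂ)
        = 2 * (inner ℂ (D h) h : ℂ) :=
  stmt15_general q hq3 T hnormal hqcomm hsph D hD
end
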